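/- arXiv:1212.1298 — 9 statements merged into one kernel-verified Lean document; each statement's English description precedes it below -/
import Mathlib

section
/- Let G and H be finite groups and let ψ : G → H be a subgroup-preserving bijection. If H is abelian group representable for n, then G is abelian group representable for n; moreover, if H is uniformly abelian group representable for n via a finite abelian group A, then G is uniformly abelian group representable for n via the same A. -/
/-- `(A, As)` represents `(G, Gs)`: for every nonempty subset `S` of indices,
the index of the intersection of the `Gs i`, `i ∈ S`, in `G` equals the index of the
intersection of the `As i`, `i ∈ S`, in `A`. -/
def Represents {G A : Type*} [Group G] [Group A] {n : ℕ}
    (Gs : Fin n → Subgroup G) (As : Fin n → Subgroup A) : Prop :=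
  ∀ S : Finset (Fin n), S.Nonempty →
    (⨅ i ∈ S, Gs i).index = (⨅ i ∈ S, As i).index

/-- `G` is abelian group representable for `n`: for every choice of `n` subgroups of `G`
there is a finite abelian group `A` with `n` subgroups representing them. -/
def AbelianGroupRepresentable (G : Type*) [Group G] (n : ℕ) : Prop :=
  ∀ Gs : Fin n → Subgroup G,
    ∃ (A : Type) (_ : CommGroup A) (_ : Fintype A) (As : Fin n → Subgroup A),
      Represents Gs As

/-! A bijection carrying each `Gs i` onto `Hs i` also carries every intersection of them onto the
corresponding intersection, so the intersections have equal orders and hence equal indices. -/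

lemma Subgroup.index_eq_of_coe_eq_image {G H : Type*} [Group G] [Finite G] [Group H]
    {ψ : G → H} (hψ : Function.Bijective ψ) {K : Subgroup G} {L : Subgroup H}
    (hKL : (L : Set H) = ψ '' K) : K.index = L.index := by
  have hcard : Nat.card L = Nat.card K := by
    simpa [← hKL] using Nat.card_image_of_injective hψ.1 (K : Set G)
  apply Nat.eq_of_mul_eq_mul_right (Nat.card_pos (α := K))
  rw [Subgroup.index_mul_card, ← hcard, Subgroup.index_mul_card, Nat.card_eq_of_bijective ψ hψ]

lemma Subgroup.coe_biInf_eq_image {G H : Type*} [Group G] [Group H] {ι : Type*}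
    {ψ : G → H} (hψ : Function.Bijective ψ) {Gs : ι → Subgroup G} {Hs : ι → Subgroup H}
    (hGH : ∀ i, (Hs i : Set H) = ψ '' Gs i) (S : Set ι) :
    ((⨅ i ∈ S, Hs i : Subgroup H) : Set H) = ψ '' (⨅ i ∈ S, Gs i : Subgroup G) := by
  simp only [Subgroup.coe_iInf, hGH, Set.image_iInter₂ hψ]

lemma Represents.of_coe_eq_image {G H A : Type*} [Group G] [Finite G] [Group H] [Group A]
    {n : ℕ} {ψ : G → H} (hψ : Function.Bijective ψ) {Gs : Fin n → Subgroup G}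
    {Hs : Fin n → Subgroup H} (hGH : ∀ i, (Hs i : Set H) = ψ '' Gs i) {As : Fin n → Subgroup A}
    (hrep : Represents Hs As) : Represents Gs As := fun S hS =>
  (Subgroup.index_eq_of_coe_eq_image hψ (Subgroup.coe_biInf_eq_image hψ hGH S)).trans
    (hrep S hS)

theorem stmt_0_general (G H : Type) [Group G] [Fintype G] [Group H]
    (ψ : G → H) (hbij : Function.Bijective ψ)
    (hsub : ∀ K : Subgroup G, ∃ L : Subgroup H, (L : Set H) = ψ '' (K : Set G))
    (n : ℕ) :
    (AbelianGroupRepresentable H n → AbelianGroupRepresentable G n) ∧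
    (∀ (A : Type) (_ : CommGroup A) (_ : Fintype A),
      (∀ Hs : Fin n → Subgroup H, ∃ As : Fin n → Subgroup A, Represents Hs As) →
      (∀ Gs : Fin n → Subgroup G, ∃ As : Fin n → Subgroup A, Represents Gs As)) := by
  have image_family (Gs : Fin n → Subgroup G) :
      ∃ Hs : Fin n → Subgroup H, ∀ i, (Hs i : Set H) = ψ '' Gs i :=
    ⟨fun i => (hsub (Gs i)).choose, fun i => (hsub (Gs i)).choose_spec⟩
  constructor
  · intro hH Gs
    obtain ⟨Hs, hGH⟩ := image_family Gs
    obtain ⟨A, hAcomm, hAfin, As, hrep⟩ := hH Hs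
    exact ⟨A, hAcomm, hAfin, As, hrep.of_coe_eq_image hbij hGH⟩
  · intro A _ _ hA Gs
    obtain ⟨Hs, hGH⟩ := image_family Gs
    obtain ⟨As, hrep⟩ := hA Hs
    exact ⟨As, hrep.of_coe_eq_image hbij hGH⟩

theorem stmt_0 (G H : Type) [Group G] [Fintype G] [Group H] [Fintype H]
    (ψ : G → H) (hbij : Function.Bijective ψ)
    (hsub : ∀ K : Subgroup G, ∃ L : Subgroup H, (L : Set H) = ψ '' (K : Set G))
    (n : ℕ) :
    (AbelianGroupRepresentable H n → AbelianGroupRepresentable G n) ∧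
    (∀ (A : Type) (_ : CommGroup A) (_ : Fintype A),
      (∀ Hs : Fin n → Subgroup H, ∃ As : Fin n → Subgroup A, Represents Hs As) →
      (∀ Gs : Fin n → Subgroup G, ∃ As : Fin n → Subgroup A, Represents Gs As)) :=
  stmt_0_general G H ψ hbij hsub n
end

section
/- For every k ≥ 1, the map ψ from the dihedral group DihedralGroup (2^k) of order 2^{k+1} to the elementary abelian 2-group (Fin (k+1) → ZMod 2), which sends the rotation r^a (a ∈ ZMod (2^k) with binary expansion a = Σ_{i=0}^{k-1} a_i 2^i) to the vector (a_0, …, a_{k-1}, 0) and sends the reflection s·r^a to the vector (a_0, …, a_{k-1}, 1), is a subgroup-preserving bijection. -/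
/-- The map from the dihedral group of order `2^(k+1)` to the elementary abelian
`2`-group `Fin (k+1) → ZMod 2`, sending the rotation `r a` (with binary expansion
`a = Σ_{i<k} a_i 2^i`) to `(a_0, …, a_{k-1}, 0)` and the reflection `sr a` to
`(a_0, …, a_{k-1}, 1)`. -/
def dihedralToVec (k : ℕ) : DihedralGroup (2 ^ k) → (Fin (k + 1) → ZMod 2)
  | DihedralGroup.r a => fun i =>
      if (i : ℕ) < k then (((a.val / 2 ^ (i : ℕ)) % 2 : ℕ) : ZMod 2) else 0
  | DihedralGroup.sr a => fun i =>
      if (i : ℕ) < k then (((a.val / 2 ^ (i : ℕ)) % 2 : ℕ) : ZMod 2) else 1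

/-!
The rotations in a subgroup `K` of the dihedral group are `r a` for `a` in an additive
subgroup `H` of `ZMod (2 ^ k)`, and `H = 2 ^ j • ZMod (2 ^ k)`. So `a - b ∈ H` means that `a`
and `b` have the same `j` lowest binary digits, a relation respected by bitwise xor. Hence `K`
is closed under the operation "xor the exponents, add the reflection parities", which `ψ`
turns into addition of vectors; as every vector is its own negative, a subset of
`(ZMod 2)^(k+1)` containing `0` and closed under addition is a subgroup.
-/

theorem Nat.ModEq.xor_two_pow {j a a' b b' : ℕ} (ha : a ≡ a' [MOD 2 ^ j])
    (hb : b ≡ b' [MOD 2 ^ j]) : a ^^^ b ≡ a' ^^^ b' [MOD 2 ^ j] := by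
  unfold Nat.ModEq at *
  rw [Nat.xor_mod_two_pow, Nat.xor_mod_two_pow, ha, hb]

theorem exists_addSubgroup_coe_eq_of_neg_eq_self {V : Type*} [AddGroup V]
    (hV : ∀ v : V, -v = v) {S : Set V} (hzero : 0 ∈ S)
    (hadd : ∀ x ∈ S, ∀ y ∈ S, x + y ∈ S) : ∃ L : AddSubgroup V, (L : Set V) = S :=
  ⟨{ carrier := S
     zero_mem' := hzero
     add_mem' := fun {x y} hx hy => hadd x hx y hy
     neg_mem' := fun {x} hx => (hV x).symm ▸ hx }, rfl⟩

namespace ZMod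

theorem exists_dvd_sub_mem_iff_modEq {n : ℕ} [NeZero n] (H : AddSubgroup (ZMod n)) :
    ∃ m, m ∣ n ∧ ∀ x y : ZMod n, x - y ∈ H ↔ x.val ≡ y.val [MOD m] := by
  obtain ⟨c, hc⟩ := Int.subgroup_cyclic (H.comap (Int.castAddHom (ZMod n)))
  rw [← AddSubgroup.zmultiples_eq_closure] at hc
  have hmem : ∀ z : ℤ, (z : ZMod n) ∈ H ↔ c ∣ z := fun z => by
    rw [← Int.mem_zmultiples_iff, ← hc]
    rfl
  refine ⟨c.natAbs, Int.natAbs_dvd_natAbs.2 ((hmem n).1 (by simp)), fun x y => ?_⟩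
  rw [Nat.ModEq.comm, Nat.modEq_iff_dvd, Int.natCast_natAbs, abs_dvd, ← hmem]
  push_cast
  simp

theorem exists_sub_mem_iff_modEq_two_pow {k : ℕ} (H : AddSubgroup (ZMod (2 ^ k))) :
    ∃ j, ∀ x y : ZMod (2 ^ k), x - y ∈ H ↔ x.val ≡ y.val [MOD 2 ^ j] := by
  obtain ⟨m, hm, hH⟩ := exists_dvd_sub_mem_iff_modEq H
  obtain ⟨j, -, rfl⟩ := (Nat.dvd_prime_pow Nat.prime_two).1 hm
  exact ⟨j, hH⟩

def bitwiseXor {n : ℕ} (a b : ZMod n) : ZMod n := (a.val ^^^ b.val : ℕ)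

theorem val_bitwiseXor {k : ℕ} (a b : ZMod (2 ^ k)) : (bitwiseXor a b).val = a.val ^^^ b.val :=
  val_cast_of_lt (Nat.xor_lt_two_pow a.val_lt b.val_lt)

@[simp]
theorem bitwiseXor_zero {n : ℕ} [NeZero n] (a : ZMod n) : bitwiseXor a 0 = a := by
  simp [bitwiseXor]

@[simp]
theorem zero_bitwiseXor {n : ℕ} [NeZero n] (a : ZMod n) : bitwiseXor 0 a = a := by
  simp [bitwiseXor]

@[simp]
theorem bitwiseXor_self {n : ℕ} (a : ZMod n) : bitwiseXor a a = 0 := by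
  simp [bitwiseXor]

theorem bitwiseXor_sub_bitwiseXor_mem {k : ℕ} (H : AddSubgroup (ZMod (2 ^ k)))
    {a a' b b' : ZMod (2 ^ k)} (ha : a - a' ∈ H) (hb : b - b' ∈ H) :
    bitwiseXor a b - bitwiseXor a' b' ∈ H := by
  obtain ⟨j, hH⟩ := exists_sub_mem_iff_modEq_two_pow H
  rw [hH, val_bitwiseXor, val_bitwiseXor]
  exact ((hH _ _).1 ha).xor_two_pow ((hH _ _).1 hb)

theorem eq_of_testBit_val_eq {k : ℕ} {a b : ZMod (2 ^ k)}
    (h : ∀ i < k, a.val.testBit i = b.val.testBit i) : a = b := by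
  refine val_injective _ (Nat.eq_of_testBit_eq fun i => ?_)
  by_cases hi : i < k
  · exact h i hi
  · have hpow : 2 ^ k ≤ 2 ^ i := Nat.pow_le_pow_right two_pos (not_lt.1 hi)
    rw [Nat.testBit_lt_two_pow (a.val_lt.trans_le hpow),
      Nat.testBit_lt_two_pow (b.val_lt.trans_le hpow)]

end ZMod

namespace DihedralGroup

def rotationSubgroup {n : ℕ} (K : Subgroup (DihedralGroup n)) : AddSubgroup (ZMod n) where
  carrier := {a | r a ∈ K}
  zero_mem' := K.one_mem
  add_mem' {a b} ha hb := by
    simpa only [Set.mem_ofPred_eq, r_mul_r] using K.mul_mem ha hb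
  neg_mem' {a} ha := by
    simpa only [Set.mem_ofPred_eq, inv_r] using K.inv_mem ha

@[simp]
theorem mem_rotationSubgroup {n : ℕ} {K : Subgroup (DihedralGroup n)} {a : ZMod n} :
    a ∈ rotationSubgroup K ↔ r a ∈ K :=
  Iff.rfl

def bitwiseXor {n : ℕ} : DihedralGroup n → DihedralGroup n → DihedralGroup n
  | r a, r b => r (ZMod.bitwiseXor a b)
  | r a, sr b => sr (ZMod.bitwiseXor a b)
  | sr a, r b => sr (ZMod.bitwiseXor a b)
  | sr a, sr b => r (ZMod.bitwiseXor a b)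

theorem bitwiseXor_mem {k : ℕ} (K : Subgroup (DihedralGroup (2 ^ k)))
    {x y : DihedralGroup (2 ^ k)} (hx : x ∈ K) (hy : y ∈ K) : bitwiseXor x y ∈ K := by
  set H := rotationSubgroup K
  rcases x with a | a <;> rcases y with b | b
  · have hab : ZMod.bitwiseXor a b - ZMod.bitwiseXor 0 0 ∈ H :=
      ZMod.bitwiseXor_sub_bitwiseXor_mem H (by simpa [H] using hx) (by simpa [H] using hy)
    simpa [H, bitwiseXor] using hab
  · have hab : ZMod.bitwiseXor a b - ZMod.bitwiseXor 0 b ∈ H :=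
      ZMod.bitwiseXor_sub_bitwiseXor_mem H (by simpa [H] using hx) (by simp)
    have hsr := K.mul_mem hy (show r (ZMod.bitwiseXor a b - b) ∈ K by simpa [H] using hab)
    rwa [sr_mul_r, add_sub_cancel] at hsr
  · have hab : ZMod.bitwiseXor a b - ZMod.bitwiseXor a 0 ∈ H :=
      ZMod.bitwiseXor_sub_bitwiseXor_mem H (by simp) (by simpa [H] using hy)
    have hsr := K.mul_mem hx (show r (ZMod.bitwiseXor a b - a) ∈ K by simpa [H] using hab)
    rwa [sr_mul_r, add_sub_cancel] at hsr
  · have hba : b - a ∈ H := by simpa [H] using K.mul_mem hx hy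
    have hab : ZMod.bitwiseXor a b - ZMod.bitwiseXor b b ∈ H :=
      ZMod.bitwiseXor_sub_bitwiseXor_mem H (by simpa using H.neg_mem hba) (by simp)
    simpa [H, bitwiseXor] using hab

end DihedralGroup

theorem natCast_div_two_pow_mod_two (a i : ℕ) :
    ((a / 2 ^ i % 2 : ℕ) : ZMod 2) = ((a.testBit i).toNat : ZMod 2) := by
  rw [Nat.toNat_testBit]

theorem Bool.toNat_cast_zmod_two_injective :
    Function.Injective fun b : Bool => (b.toNat : ZMod 2) := by
  decide

theorem natCast_div_two_pow_mod_two_xor (a b i : ℕ) :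
    (((a ^^^ b) / 2 ^ i % 2 : ℕ) : ZMod 2) =
      ((a / 2 ^ i % 2 : ℕ) : ZMod 2) + ((b / 2 ^ i % 2 : ℕ) : ZMod 2) := by
  simp only [natCast_div_two_pow_mod_two, Nat.testBit_xor]
  cases a.testBit i <;> cases b.testBit i <;> decide

open DihedralGroup in
theorem dihedralToVec_xor (k : ℕ) (x y : DihedralGroup (2 ^ k)) :
    dihedralToVec k (bitwiseXor x y) = dihedralToVec k x + dihedralToVec k y := by
  rcases x with a | a <;> rcases y with b | b <;> funext i <;>
    simp only [dihedralToVec, bitwiseXor, Pi.add_apply, ZMod.val_bitwiseXor] <;> split_ifs <;>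
    first | exact natCast_div_two_pow_mod_two_xor _ _ _ | decide

theorem dihedralToVec_one (k : ℕ) : dihedralToVec k 1 = 0 := by
  show dihedralToVec k (DihedralGroup.r 0) = 0
  funext i
  simp [dihedralToVec]

open DihedralGroup in
theorem dihedralToVec_injective (k : ℕ) : Function.Injective (dihedralToVec k) := by
  have bits {a b : ZMod (2 ^ k)} (h : ∀ i < k,
      ((a.val / 2 ^ i % 2 : ℕ) : ZMod 2) = ((b.val / 2 ^ i % 2 : ℕ) : ZMod 2)) : a = b :=
    ZMod.eq_of_testBit_val_eq fun i hi => Bool.toNat_cast_zmod_two_injective <| by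
      simpa only [natCast_div_two_pow_mod_two] using h i hi
  intro x y h
  have low (i : ℕ) (hi : i < k) := congrFun h ⟨i, by omega⟩
  rcases x with a | a <;> rcases y with b | b
  · exact congrArg r (bits fun i hi => by simpa [dihedralToVec, hi] using low i hi)
  · simpa [dihedralToVec] using congrFun h (Fin.last k)
  · simpa [dihedralToVec] using congrFun h (Fin.last k)
  · exact congrArg sr (bits fun i hi => by simpa [dihedralToVec, hi] using low i hi)

theorem dihedralToVec_bijective (k : ℕ) : Function.Bijective (dihedralToVec k) := by
  refine (Fintype.bijective_iff_injective_and_card _).2 ⟨dihedralToVec_injective k, ?_⟩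
  rw [DihedralGroup.card, Fintype.card_fun, ZMod.card, Fintype.card_fin, pow_succ, mul_comm]

theorem stmt_2_general (k : ℕ) :
    Function.Bijective (dihedralToVec k) ∧
    ∀ K : Subgroup (DihedralGroup (2 ^ k)),
      ∃ L : AddSubgroup (Fin (k + 1) → ZMod 2),
        (L : Set (Fin (k + 1) → ZMod 2)) = dihedralToVec k '' (K : Set (DihedralGroup (2 ^ k))) := by
  refine ⟨dihedralToVec_bijective k, fun K => ?_⟩
  refine exists_addSubgroup_coe_eq_of_neg_eq_self
    (fun v => funext fun i => ZMod.neg_eq_self_mod_two (v i))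
    ⟨1, K.one_mem, dihedralToVec_one k⟩ ?_
  rintro _ ⟨x, hx, rfl⟩ _ ⟨y, hy, rfl⟩
  exact ⟨DihedralGroup.bitwiseXor x y, DihedralGroup.bitwiseXor_mem K hx hy,
    dihedralToVec_xor k x y⟩

theorem stmt_2 (k : ℕ) (hk : 1 ≤ k) :
    Function.Bijective (dihedralToVec k) ∧
    ∀ K : Subgroup (DihedralGroup (2 ^ k)),
      ∃ L : AddSubgroup (Fin (k + 1) → ZMod 2),
        (L : Set (Fin (k + 1) → ZMod 2)) = dihedralToVec k '' (K : Set (DihedralGroup (2 ^ k))) :=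
  stmt_2_general k
end

section
/- Let k ≥ 1 and let H be a subgroup of the dihedral group DihedralGroup (2^k) of order 2^{k+1}. Then H has one of the following forms: (1) H is the cyclic subgroup generated by r^{2^i} for some 0 ≤ i ≤ k, i.e. H = {r^a : a ≡ 0 mod 2^i}; (2) H is the subgroup {1, s·r^a} generated by a reflection s·r^a for some 0 ≤ a < 2^k; (3) H is generated by r^{2^i} and s·r^c for some 0 ≤ i < k and 0 ≤ c < 2^i, i.e. H = {r^a : a ≡ 0 mod 2^i} ∪ {s·r^b : b ≡ c mod 2^i}. -/
/-!
The rotations in `H` form an additive subgroup of `ZMod (2 ^ k)`, and every such subgroup consists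
of the multiples of some `2 ^ i`. If `H` also contains a reflection `sr c`, then `sr b ∈ H` exactly
when `r (b - c) ∈ H`, i.e. when `b ≡ c [MOD 2 ^ i]`; for `i = k` this leaves only `1` and `sr c`.
-/

namespace ZMod

theorem exists_dvd_forall_mem_iff_dvd_val {n : ℕ} [NeZero n] (A : AddSubgroup (ZMod n)) :
    ∃ d, d ∣ n ∧ ∀ a : ZMod n, a ∈ A ↔ d ∣ a.val := by
  obtain ⟨g, hg⟩ := Int.subgroup_cyclic (A.comap (Int.castAddHom (ZMod n)))
  have intCast_mem_iff (m : ℤ) : (m : ZMod n) ∈ A ↔ g ∣ m := by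
    rw [← Int.mem_zmultiples_iff, AddSubgroup.zmultiples_eq_closure, ← hg]
    rfl
  refine ⟨g.natAbs, ?_, fun a => ?_⟩
  · exact Int.natCast_dvd_natCast.1 (Int.natAbs_dvd.2 ((intCast_mem_iff n).1 (by simp)))
  · rw [← Int.natCast_dvd_natCast, Int.natAbs_dvd, ← intCast_mem_iff]
    simp

theorem exists_forall_mem_iff_pow_dvd_val {p : ℕ} (hp : p.Prime) (k : ℕ)
    (A : AddSubgroup (ZMod (p ^ k))) : ∃ i ≤ k, ∀ a : ZMod (p ^ k), a ∈ A ↔ p ^ i ∣ a.val := by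
  have : NeZero (p ^ k) := ⟨pow_ne_zero k hp.ne_zero⟩
  obtain ⟨d, hd, hA⟩ := exists_dvd_forall_mem_iff_dvd_val A
  obtain ⟨i, hik, rfl⟩ := (Nat.dvd_prime_pow hp).1 hd
  exact ⟨i, hik, hA⟩

theorem val_mod_eq_val_mod_iff {n d : ℕ} [NeZero n] (hd : d ∣ n) (b c : ZMod n) :
    b.val % d = c.val % d ↔ d ∣ (b - c).val := by
  rw [← natCast_eq_natCast_iff', ← natCast_eq_zero_iff, natCast_val, natCast_val, natCast_val,
    cast_sub hd, sub_eq_zero]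

end ZMod

namespace DihedralGroup

variable {n : ℕ} (H : Subgroup (DihedralGroup n))

def rotations : AddSubgroup (ZMod n) where
  carrier := {a | r a ∈ H}
  zero_mem' := H.one_mem
  add_mem' ha hb := by simpa only [Set.mem_ofPred_eq, ← r_mul_r] using H.mul_mem ha hb
  neg_mem' ha := by simpa only [Set.mem_ofPred_eq, ← inv_r] using H.inv_mem ha

@[simp]
theorem mem_rotations {a : ZMod n} : a ∈ rotations H ↔ r a ∈ H := Iff.rfl

theorem sr_mem_iff_of_sr_mem {b c : ZMod n} (hc : sr c ∈ H) : sr b ∈ H ↔ r (b - c) ∈ H := by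
  rw [← H.mul_mem_cancel_left hc, sr_mul_sr]

end DihedralGroup

open DihedralGroup in
theorem stmt_3_general (k : ℕ) (H : Subgroup (DihedralGroup (2 ^ k))) :
    (∃ i ≤ k, (H : Set (DihedralGroup (2 ^ k))) =
        {x | ∃ a : ZMod (2 ^ k), x = DihedralGroup.r a ∧ a.val % 2 ^ i = 0}) ∨
    (∃ a : ZMod (2 ^ k), (H : Set (DihedralGroup (2 ^ k))) = {1, DihedralGroup.sr a}) ∨
    (∃ i < k, ∃ c < 2 ^ i, (H : Set (DihedralGroup (2 ^ k))) =
        {x | ∃ a : ZMod (2 ^ k), x = DihedralGroup.r a ∧ a.val % 2 ^ i = 0} ∪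
        {x | ∃ b : ZMod (2 ^ k), x = DihedralGroup.sr b ∧ b.val % 2 ^ i = c}) := by
  obtain ⟨i, hik, hrot⟩ := ZMod.exists_forall_mem_iff_pow_dvd_val Nat.prime_two k (rotations H)
  have r_mem (a : ZMod (2 ^ k)) : r a ∈ H ↔ 2 ^ i ∣ a.val := by rw [← mem_rotations, hrot]
  by_cases hs : ∃ c, sr c ∈ H
  swap
  · push Not at hs
    refine .inl ⟨i, hik, ?_⟩
    ext (a | b) <;> simp [r_mem, Nat.dvd_iff_mod_eq_zero, hs]
  obtain ⟨c, hc⟩ := hs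
  rcases hik.lt_or_eq with hik | rfl
  · refine .inr (.inr ⟨i, hik, c.val % 2 ^ i, Nat.mod_lt _ (by positivity), ?_⟩)
    ext (a | b) <;> simp [r_mem, Nat.dvd_iff_mod_eq_zero, sr_mem_iff_of_sr_mem H hc,
      ZMod.val_mod_eq_val_mod_iff (pow_dvd_pow 2 hik.le)]
  · have r_mem_iff_eq_zero (a : ZMod (2 ^ i)) : r a ∈ H ↔ a = 0 := by
      rw [r_mem, ← ZMod.val_eq_zero]
      exact ⟨fun h => Nat.eq_zero_of_dvd_of_lt h (ZMod.val_lt a), fun h => h ▸ dvd_zero _⟩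
    refine .inr (.inl ⟨c, ?_⟩)
    ext (a | b) <;>
      simp [r_mem_iff_eq_zero, sr_mem_iff_of_sr_mem H hc, sub_eq_zero, one_def, -r_zero]

theorem stmt_3 (k : ℕ) (hk : 1 ≤ k) (H : Subgroup (DihedralGroup (2 ^ k))) :
    (∃ i ≤ k, (H : Set (DihedralGroup (2 ^ k))) =
        {x | ∃ a : ZMod (2 ^ k), x = DihedralGroup.r a ∧ a.val % 2 ^ i = 0}) ∨
    (∃ a : ZMod (2 ^ k), (H : Set (DihedralGroup (2 ^ k))) = {1, DihedralGroup.sr a}) ∨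
    (∃ i < k, ∃ c < 2 ^ i, (H : Set (DihedralGroup (2 ^ k))) =
        {x | ∃ a : ZMod (2 ^ k), x = DihedralGroup.r a ∧ a.val % 2 ^ i = 0} ∪
        {x | ∃ b : ZMod (2 ^ k), x = DihedralGroup.sr b ∧ b.val % 2 ^ i = c}) :=
  stmt_3_general k H
end

section
/- Let k ≥ 2. Then for every n ≥ 1, the dicyclic (generalized quaternion) group QuaternionGroup (2^{k-1}) of order 2^{k+1} is uniformly abelian group representable for n via the elementary abelian group (Fin (k+1) → ZMod 2): for every choice of subgroups G_1, …, G_n of QuaternionGroup (2^{k-1}) there exist subgroups A_1, …, A_n of (Fin (k+1) → ZMod 2) such that for every nonempty subset 𝒜 ⊆ {1, …, n}, [QuaternionGroup (2^{k-1}) : ⋂_{i∈𝒜} G_i] = [(Fin (k+1) → ZMod 2) : ⋂_{i∈𝒜} A_i]. -/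
/-!
Write the elements of `QuaternionGroup (2 ^ m)` as `a i` and `xa i` with `i : ZMod (2 ^ (m + 1))`,
and send `a i` to `(0, digits of i)` and `xa i` to `(1, digits of i)` in `(ZMod 2) ^ (m + 2)`,
using the `m + 1` binary digits of `i.val`. For a subgroup `H`, the indices `i` with `a i ∈ H`
form a subgroup of a cyclic `2`-group, hence are the multiples of some `2 ^ v`, and the indices `j`
with `xa j ∈ H` are empty or one coset of it. Binary digits turn "congruent mod `2 ^ v`" into
"agree in the lowest `v` digits", so this bijection maps every subgroup onto an additive subgroup.
A bijection with that property preserves indices of intersections.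
-/

theorem Nat.mod_two_pow_eq_iff {x y v : ℕ} :
    x % 2 ^ v = y % 2 ^ v ↔ ∀ b < v, x / 2 ^ b % 2 = y / 2 ^ b % 2 := by
  have digit_eq_iff : ∀ b, x / 2 ^ b % 2 = y / 2 ^ b % 2 ↔ x.testBit b = y.testBit b := by
    intro b
    rw [← Nat.toNat_testBit, ← Nat.toNat_testBit]
    cases x.testBit b <;> cases y.testBit b <;> simp
  simp only [digit_eq_iff]
  constructor
  · intro h b hb
    simpa [hb] using congrArg (·.testBit b) h
  · intro h
    apply Nat.eq_of_testBit_eq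
    intro b
    by_cases hb : b < v <;> simp [hb, h]

theorem ZMod.exists_dvd_sub_mem_iff {N : ℕ} [NeZero N] (E : AddSubgroup (ZMod N)) :
    ∃ d, d ∣ N ∧ ∀ i j : ZMod N, i - j ∈ E ↔ i.val % d = j.val % d := by
  obtain ⟨a, ha⟩ := Int.subgroup_cyclic (E.comap (Int.castAddHom (ZMod N)))
  have cast_mem_iff : ∀ z : ℤ, (z : ZMod N) ∈ E ↔ (a.natAbs : ℤ) ∣ z := by
    intro z
    rw [Int.natAbs_dvd, ← Int.mem_zmultiples_iff, AddSubgroup.zmultiples_eq_closure, ← ha]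
    rfl
  refine ⟨a.natAbs, ?_, fun i j => ?_⟩
  · exact_mod_cast (cast_mem_iff N).1 (by simp)
  · have := cast_mem_iff ((j.val : ℤ) - i.val)
    rw [← neg_mem_iff, ← Nat.modEq_iff_dvd] at this
    simpa [Nat.ModEq, eq_comm] using this

def bits (K x : ℕ) : Fin K → ZMod 2 := fun b => ((x / 2 ^ (b : ℕ) : ℕ) : ZMod 2)

def vanishingBelow (K v : ℕ) : AddSubgroup (Fin K → ZMod 2) :=
  AddSubgroup.pi {b | (b : ℕ) < v} fun _ => ⊥

theorem bits_sub_mem_vanishingBelow_iff {K v x y : ℕ} (hv : v ≤ K) :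
    bits K x - bits K y ∈ vanishingBelow K v ↔ x % 2 ^ v = y % 2 ^ v := by
  simp only [vanishingBelow, AddSubgroup.mem_pi, Set.mem_ofPred_eq, AddSubgroup.mem_bot,
    Pi.sub_apply, sub_eq_zero, bits, ZMod.natCast_eq_natCast_iff', Nat.mod_two_pow_eq_iff]
  exact ⟨fun h b hb => h ⟨b, by omega⟩ hb, fun h b hb => h b hb⟩

theorem bits_eq_iff {K x y : ℕ} : bits K x = bits K y ↔ x % 2 ^ K = y % 2 ^ K := by
  rw [← bits_sub_mem_vanishingBelow_iff le_rfl]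
  simp [vanishingBelow, AddSubgroup.mem_pi, sub_eq_zero, funext_iff]

@[simp]
theorem bits_zero (K : ℕ) : bits K 0 = 0 := by
  ext b
  simp [bits]

namespace QuaternionGroup

variable {n : ℕ}

def aIndices (H : Subgroup (QuaternionGroup n)) : AddSubgroup (ZMod (2 * n)) where
  carrier := {i | a i ∈ H}
  zero_mem' := H.one_mem
  add_mem' hi hj := by
    simpa only [Set.mem_ofPred_eq, a_mul_a] using H.mul_mem hi hj
  neg_mem' hi := H.inv_mem hi

theorem xa_mem_iff_of_xa_mem {H : Subgroup (QuaternionGroup n)} {t : ZMod (2 * n)}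
    (ht : xa t ∈ H) (j : ZMod (2 * n)) : xa j ∈ H ↔ a (j - t) ∈ H := by
  rw [← H.mul_mem_cancel_left ht (y := a (j - t)), xa_mul_a, add_sub_cancel]

def encode (m : ℕ) : QuaternionGroup (2 ^ m) → Fin (m + 2) → ZMod 2
  | a i => Fin.cons 0 (bits (m + 1) i.val)
  | xa i => Fin.cons 1 (bits (m + 1) i.val)

theorem encode_injective (m : ℕ) : Function.Injective (encode m) := by
  have bits_val_injective : Function.Injective fun i : ZMod (2 * 2 ^ m) => bits (m + 1) i.val := by
    intro i j h
    have hlt : ∀ k : ZMod (2 * 2 ^ m), k.val < 2 ^ (m + 1) := fun k => by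
      rw [pow_succ']
      exact k.val_lt
    rw [bits_eq_iff, Nat.mod_eq_of_lt (hlt i), Nat.mod_eq_of_lt (hlt j)] at h
    exact ZMod.val_injective _ h
  rintro (i | i) (j | j) h <;>
    simp only [encode, Fin.cons_inj, zero_ne_one, one_ne_zero, false_and, true_and,
      a.injEq, xa.injEq] at h ⊢ <;>
    exact bits_val_injective h

noncomputable def encodeEquiv (m : ℕ) : QuaternionGroup (2 ^ m) ≃ (Fin (m + 2) → ZMod 2) :=
  Equiv.ofBijective (encode m) <| (Fintype.bijective_iff_injective_and_card _).mpr
    ⟨encode_injective m, by simp [QuaternionGroup.card, pow_succ]; ring⟩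

theorem exists_addSubgroup_encode_mem_iff (m : ℕ) (H : Subgroup (QuaternionGroup (2 ^ m))) :
    ∃ B : AddSubgroup (Fin (m + 2) → ZMod 2), ∀ g, encode m g ∈ B ↔ g ∈ H := by
  obtain ⟨d, hd, hE⟩ := ZMod.exists_dvd_sub_mem_iff (aIndices H)
  obtain ⟨v, hv, rfl⟩ := (Nat.dvd_prime_pow Nat.prime_two).mp (pow_succ' 2 m ▸ hd)
  set L := vanishingBelow (m + 1) v
  have bits_sub_mem_iff (i j : ZMod (2 * 2 ^ m)) :
      bits (m + 1) i.val - bits (m + 1) j.val ∈ L ↔ a (i - j) ∈ H :=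
    (bits_sub_mem_vanishingBelow_iff hv).trans (hE i j).symm
  have bits_mem_iff (i : ZMod (2 * 2 ^ m)) : bits (m + 1) i.val ∈ L ↔ a i ∈ H := by
    simpa using bits_sub_mem_iff i 0
  -- `φ w y ∈ L` means `y = (0, x)` with `x ∈ L`, or `y = (1, x)` with `x - w ∈ L`.
  let φ (w : Fin (m + 1) → ZMod 2) : (Fin (m + 2) → ZMod 2) →+ (Fin (m + 1) → ZMod 2) :=
    AddMonoidHom.mk' (fun y => Fin.tail y - y 0 • w) fun y z => by
      ext; simp [Fin.tail, add_mul]; ring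
  by_cases hxa : ∃ t, xa t ∈ H
  · obtain ⟨t, ht⟩ := hxa
    refine ⟨L.comap (φ (bits (m + 1) t.val)), ?_⟩
    rintro (i | j)
    · simpa [φ, encode] using bits_mem_iff i
    · simpa [φ, encode, xa_mem_iff_of_xa_mem ht] using bits_sub_mem_iff j t
  · refine ⟨L.comap (φ 0) ⊓ (Pi.evalAddMonoidHom _ 0).ker, ?_⟩
    rintro (i | j)
    · simpa [φ, encode] using bits_mem_iff i
    · simpa [φ, encode] using fun h => hxa ⟨j, h⟩

end QuaternionGroup

theorem index_eq_of_equiv_mem_iff {G A : Type*} [Group G] [Finite G] [AddGroup A] (e : G ≃ A)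
    {H : Subgroup G} {B : AddSubgroup A} (h : ∀ g, e g ∈ B ↔ g ∈ H) : H.index = B.index := by
  have hcard : Nat.card H = Nat.card B := Nat.card_congr (e.subtypeEquiv fun g => (h g).symm)
  apply Nat.eq_of_mul_eq_mul_right (Nat.card_pos (α := H))
  rw [H.index_mul_card, hcard, B.index_mul_card, Nat.card_congr e]

theorem exists_index_iInf_eq_of_equiv {G A ι : Type*} [Group G] [Finite G] [AddGroup A]
    (e : G ≃ A) (he : ∀ H : Subgroup G, ∃ B : AddSubgroup A, ∀ g, e g ∈ B ↔ g ∈ H)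
    (Gs : ι → Subgroup G) :
    ∃ As : ι → AddSubgroup A, ∀ S : Finset ι, (⨅ i ∈ S, Gs i).index = (⨅ i ∈ S, As i).index := by
  choose B hB using he
  refine ⟨fun i => B (Gs i), fun S => index_eq_of_equiv_mem_iff e fun g => ?_⟩
  simp [Subgroup.mem_iInf, AddSubgroup.mem_iInf, hB]

theorem stmt_10_general (k : ℕ) (hk : 2 ≤ k) (n : ℕ)
    (Gs : Fin n → Subgroup (QuaternionGroup (2 ^ (k - 1)))) :
    ∃ As : Fin n → AddSubgroup (Fin (k + 1) → ZMod 2),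
      ∀ S : Finset (Fin n), S.Nonempty →
        (⨅ i ∈ S, Gs i).index = (⨅ i ∈ S, As i).index := by
  obtain ⟨m, rfl⟩ : ∃ m, k = m + 1 := ⟨k - 1, by omega⟩
  obtain ⟨As, hAs⟩ := exists_index_iInf_eq_of_equiv (QuaternionGroup.encodeEquiv m)
    (QuaternionGroup.exists_addSubgroup_encode_mem_iff m) Gs
  exact ⟨As, fun S _ => hAs S⟩

theorem stmt_10 (k : ℕ) (hk : 2 ≤ k) (n : ℕ) (hn : 1 ≤ n)
    (Gs : Fin n → Subgroup (QuaternionGroup (2 ^ (k - 1)))) :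
    ∃ As : Fin n → AddSubgroup (Fin (k + 1) → ZMod 2),
      ∀ S : Finset (Fin n), S.Nonempty →
        (⨅ i ∈ S, Gs i).index = (⨅ i ∈ S, As i).index :=
  stmt_10_general k hk n Gs
end

section
/- Let p be a prime and let G be a finite p-group of order p^m. Then G is uniformly abelian group representable for n = 2 via the elementary abelian group (Fin m → ZMod p): for every pair of subgroups G_1, G_2 of G there exist subgroups A_1, A_2 of A = (Fin m → ZMod p) such that [G : G_1] = [A : A_1], [G : G_2] = [A : A_2], and [G : G_1 ∩ G_2] = [A : A_1 ∩ A_2]. -/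
/-!
All indices involved are powers of `p`: say `[G : G₁] = p^a`, `[G : G₂] = p^b` and
`[G : G₁ ∩ G₂] = p^c`. Then `max a b ≤ c ≤ min (a + b) m`, and any such triple is realised by
coordinate subgroups of `(ZMod p)^m`: the functions vanishing on a set `S` of `a` coordinates,
resp. on a set `T` of `b` coordinates, where `S ∪ T` has `c` elements.
-/

open Finset

namespace Subgroup

variable {ι M : Type*} [Group M]

@[to_additive]
theorem pi_union (I J : Set ι) (H : ι → Subgroup M) :
    pi (I ∪ J) H = pi I H ⊓ pi J H :=
  SetLike.coe_injective Set.union_pi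

@[to_additive]
theorem index_pi_bot [Fintype ι] (S : Finset ι) :
    (pi (S : Set ι) fun _ => (⊥ : Subgroup M)).index = Nat.card M ^ #S := by
  classical
  have hpi : (pi (S : Set ι) fun _ => (⊥ : Subgroup M)) =
      pi Set.univ fun i => if i ∈ S then ⊥ else ⊤ := by
    ext x
    simp only [mem_pi, Finset.mem_coe, Set.mem_univ, true_implies]
    refine forall_congr' fun i => ?_
    split_ifs with hi <;> simp [hi]
  rw [hpi, index_pi]
  simp only [apply_ite index, index_bot, index_top, prod_ite_mem, univ_inter, prod_const]

theorem exists_index_eq_pow_of_card_eq_pow {G : Type*} [Group G] {p m : ℕ} (hp : p.Prime)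
    (hG : Nat.card G = p ^ m) (H : Subgroup G) : ∃ a ≤ m, H.index = p ^ a :=
  (Nat.dvd_prime_pow hp).mp (hG ▸ H.index_dvd_card)

end Subgroup

theorem Finset.exists_card_eq_card_eq_union_eq {α : Type*} [DecidableEq α] {U : Finset α}
    {a b : ℕ} (ha : a ≤ #U) (hb : b ≤ #U) (hab : #U ≤ a + b) :
    ∃ S T : Finset α, #S = a ∧ #T = b ∧ S ∪ T = U := by
  obtain ⟨S, hSU, hS⟩ := exists_subset_card_eq ha
  obtain ⟨R, hRS, hR⟩ := exists_subset_card_eq (show a + b - #U ≤ #S by omega)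
  refine ⟨S, U \ S ∪ R, hS, ?_, ?_⟩
  · rw [card_union_of_disjoint (disjoint_sdiff_self_left.mono_right hRS), card_sdiff_of_subset hSU]
    omega
  · rw [← union_assoc, union_sdiff_of_subset hSU, union_eq_left.mpr (hRS.trans hSU)]

theorem stmt_13_general (p : ℕ) (hp : p.Prime) (G : Type) [Group G]
    (m : ℕ) (hG : Nat.card G = p ^ m) (G1 G2 : Subgroup G) :
    ∃ A1 A2 : AddSubgroup (Fin m → ZMod p),
      G1.index = A1.index ∧ G2.index = A2.index ∧
        (G1 ⊓ G2).index = (A1 ⊓ A2).index := by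
  obtain ⟨a, -, ha⟩ := G1.exists_index_eq_pow_of_card_eq_pow hp hG
  obtain ⟨b, -, hb⟩ := G2.exists_index_eq_pow_of_card_eq_pow hp hG
  obtain ⟨c, hcm, hc⟩ := (G1 ⊓ G2).exists_index_eq_pow_of_card_eq_pow hp hG
  have exponent_le {H K : Subgroup G} {k l : ℕ} (hHK : H ≤ K) (hH : H.index = p ^ l)
      (hK : K.index = p ^ k) : k ≤ l :=
    (Nat.pow_dvd_pow_iff_le_right hp.one_lt).mp (hH ▸ hK ▸ Subgroup.index_dvd_of_le hHK)
  have hcab : c ≤ a + b :=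
    (Nat.pow_le_pow_iff_right hp.one_lt).mp (pow_add p a b ▸ ha ▸ hb ▸ hc ▸ Subgroup.index_inf_le)
  obtain ⟨U, -, hU⟩ := exists_subset_card_eq (show c ≤ #(univ : Finset (Fin m)) by simpa)
  obtain ⟨S, T, hS, hT, hST⟩ := exists_card_eq_card_eq_union_eq (U := U)
    (hU ▸ exponent_le inf_le_left hc ha) (hU ▸ exponent_le inf_le_right hc hb) (hU ▸ hcab)
  refine ⟨.pi S fun _ => ⊥, .pi T fun _ => ⊥, ?_, ?_, ?_⟩
  all_goals simp only [← AddSubgroup.pi_union, ← coe_union, hST, AddSubgroup.index_pi_bot,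
    Nat.card_zmod, ha, hb, hc, hS, hT, hU]

theorem stmt_13 (p : ℕ) (hp : p.Prime) (G : Type) [Group G] [Fintype G]
    (m : ℕ) (hG : Nat.card G = p ^ m) (G1 G2 : Subgroup G) :
    ∃ A1 A2 : AddSubgroup (Fin m → ZMod p),
      G1.index = A1.index ∧ G2.index = A2.index ∧
        (G1 ⊓ G2).index = (A1 ⊓ A2).index :=
  stmt_13_general p hp G m hG G1 G2
end

section
/- Let G and H be finite groups whose orders are coprime. If G is abelian group representable for n and H is abelian group representable for n, then the direct product G × H is abelian group representable for n. -/
/-!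
When `|G|` and `|H|` are coprime, every subgroup `K ≤ G × H` is the product of its two
projections: a suitable power of `(g, h) ∈ K` is `(g, 1)`. Intersections of product subgroups
are products and indices multiply over products, so if `A` represents the projections of the
`Kᵢ` to `G` and `B` those to `H`, then `A × B` represents the `Kᵢ`.
-/

namespace Subgroup

variable {G H : Type*} [Group G] [Group H]

theorem mk_fst_one_mem_of_coprime {K : Subgroup (G × H)} {p : G × H} (hp : p ∈ K)
    (hco : (orderOf p.1).Coprime (Nat.card H)) : (p.1, (1 : H)) ∈ K := by
  obtain ⟨m, hm⟩ := exists_pow_eq_self_of_coprime hco.symm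
  have hpow : (p ^ Nat.card H) ^ m = (p.1, 1) := by
    simp only [Prod.pow_def, pow_card_eq_one', one_pow, hm]
  exact hpow ▸ K.pow_mem (K.pow_mem hp _) m

theorem mk_one_snd_mem_of_coprime {K : Subgroup (G × H)} {p : G × H} (hp : p ∈ K)
    (hco : (Nat.card G).Coprime (orderOf p.2)) : ((1 : G), p.2) ∈ K := by
  obtain ⟨m, hm⟩ := exists_pow_eq_self_of_coprime hco
  have hpow : (p ^ Nat.card G) ^ m = (1, p.2) := by
    simp only [Prod.pow_def, pow_card_eq_one', one_pow, hm]
  exact hpow ▸ K.pow_mem (K.pow_mem hp _) m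

theorem eq_prod_map_fst_map_snd_of_coprime (hco : (Nat.card G).Coprime (Nat.card H))
    (K : Subgroup (G × H)) :
    K = (K.map (MonoidHom.fst G H)).prod (K.map (MonoidHom.snd G H)) := by
  refine le_antisymm (fun p hp => ⟨⟨p, hp, rfl⟩, ⟨p, hp, rfl⟩⟩) ?_
  rintro ⟨-, -⟩ ⟨⟨p, hp, rfl⟩, ⟨q, hq, rfl⟩⟩
  have hp₁ :=
    mk_fst_one_mem_of_coprime hp (hco.coprime_dvd_left (_root_.orderOf_dvd_natCard p.1))
  have hq₂ :=
    mk_one_snd_mem_of_coprime hq (hco.coprime_dvd_right (_root_.orderOf_dvd_natCard q.2))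
  simpa using K.mul_mem hp₁ hq₂

theorem iInf_prod {ι : Sort*} (P : ι → Subgroup G) (Q : ι → Subgroup H) :
    ⨅ i, (P i).prod (Q i) = (⨅ i, P i).prod (⨅ i, Q i) := by
  ext
  simp only [mem_iInf, mem_prod, forall_and]

end Subgroup

theorem Represents.prod {G H A B : Type*} [Group G] [Group H] [Group A] [Group B] {n : ℕ}
    {Gs : Fin n → Subgroup G} {Hs : Fin n → Subgroup H} {As : Fin n → Subgroup A}
    {Bs : Fin n → Subgroup B} (hA : Represents Gs As) (hB : Represents Hs Bs) :
    Represents (fun i => (Gs i).prod (Hs i)) (fun i => (As i).prod (Bs i)) := by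
  intro S hS
  simp only [Subgroup.iInf_prod, Subgroup.index_prod, hA S hS, hB S hS]

theorem stmt_15_general (G H : Type) [Group G] [Group H]
    (hco : Nat.Coprime (Nat.card G) (Nat.card H)) (n : ℕ)
    (hG : AbelianGroupRepresentable G n) (hH : AbelianGroupRepresentable H n) :
    AbelianGroupRepresentable (G × H) n := by
  intro Ks
  obtain ⟨A, _, _, As, hA⟩ := hG fun i => (Ks i).map (MonoidHom.fst G H)
  obtain ⟨B, _, _, Bs, hB⟩ := hH fun i => (Ks i).map (MonoidHom.snd G H)
  refine ⟨A × B, inferInstance, inferInstance, fun i => (As i).prod (Bs i), ?_⟩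
  have hKs :
      Ks = fun i => ((Ks i).map (MonoidHom.fst G H)).prod ((Ks i).map (MonoidHom.snd G H)) :=
    funext fun i => (Ks i).eq_prod_map_fst_map_snd_of_coprime hco
  rw [hKs]
  exact hA.prod hB

theorem stmt_15 (G H : Type) [Group G] [Fintype G] [Group H] [Fintype H]
    (hco : Nat.Coprime (Nat.card G) (Nat.card H)) (n : ℕ)
    (hG : AbelianGroupRepresentable G n) (hH : AbelianGroupRepresentable H n) :
    AbelianGroupRepresentable (G × H) n :=
  stmt_15_general G H hco n hG hH
end

section
/- Every finite nilpotent group G is abelian group representable for n = 2: for every pair of subgroups G_1, G_2 of G there exists a finite abelian group A with subgroups A_1, A_2 such that [G : G_1] = [A : A_1], [G : G_2] = [A : A_2], and [G : G_1 ∩ G_2] = [A : A_1 ∩ A_2]. -/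
/-!
Every Sylow subgroup `P` of a finite nilpotent group is normal, and then the `p`-part of `[G : L]`
is `[P : L ∩ P]`. In the `p`-group `P` the inequality `[P : H ∩ K] ≤ [P : H] [P : K]` is one between
powers of `p`, hence a divisibility; so `[G : G₁ ∩ G₂]` divides `[G : G₁] [G : G₂]`.
Conversely, if `a ∣ c`, `b ∣ c` and `c ∣ a b`, write `c = a e` and `b = e g`: in `ℤ/a × ℤ/(e g)`
the subgroups `0 × ℤ/(e g)` and `gℤ/a × eℤ/(e g)` have indices `a`, `b`, and intersection of index `c`.
-/

open Subgroup

theorem Subgroup.prod_inf_prod {G N : Type*} [Group G] [Group N]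
    (H H' : Subgroup G) (K K' : Subgroup N) :
    H.prod K ⊓ H'.prod K' = (H ⊓ H').prod (K ⊓ K') := by
  ext ⟨x, y⟩
  simp only [mem_inf, mem_prod]
  tauto

theorem IsCyclic.index_powMonoidHom_range_of_dvd {G : Type*} [CommGroup G] [IsCyclic G]
    [Finite G] {d : ℕ} (hd : d ∣ Nat.card G) : (powMonoidHom d : G →* G).range.index = d := by
  rw [IsCyclic.index_powMonoidHom_range, Nat.gcd_eq_right hd]

theorem IsPGroup.relIndex_inf_dvd {G : Type*} [Group G] {p : ℕ} [Fact p.Prime]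
    {P : Subgroup G} (hP : IsPGroup p P) [Finite P] (H K : Subgroup G) :
    (H ⊓ K).relIndex P ∣ H.relIndex P * K.relIndex P := by
  obtain ⟨m, hm⟩ : ∃ m, H.relIndex P = p ^ m := hP.index _
  obtain ⟨n, hn⟩ : ∃ n, K.relIndex P = p ^ n := hP.index _
  obtain ⟨k, hk⟩ : ∃ k, (H ⊓ K).relIndex P = p ^ k := hP.index _
  have hle := relIndex_inf_le (H := H) (K := K) (L := P)
  rw [hm, hn, hk, ← pow_add] at hle ⊢
  exact pow_dvd_pow p ((Nat.pow_le_pow_iff_right (Fact.out : p.Prime).one_lt).mp hle)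

theorem Sylow.ordProj_index_eq_relIndex {G : Type*} [Group G] [Finite G] {p : ℕ}
    [Fact p.Prime] (P : Sylow p G) [P.Normal] (L : Subgroup G) :
    ordProj[p] L.index = L.relIndex P := by
  have hp : p.Prime := Fact.out
  have ordProj_of_not_dvd : ∀ n, ¬ p ∣ n → ordProj[p] n = 1 := fun n h => by
    rw [Nat.factorization_eq_zero_of_not_dvd h, pow_zero]
  have hPL : ¬ p ∣ (P : Subgroup G).relIndex L :=
    fun h => P.not_dvd_index (h.trans (relIndex_dvd_index_of_normal _ _))
  obtain ⟨k, hk⟩ : ∃ k, L.relIndex P = p ^ k := P.isPGroup'.index _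
  -- both sides are `[G : P ∩ L]`
  have key : (P : Subgroup G).relIndex L * L.index = p ^ k * (P : Subgroup G).index := by
    rw [← hk, ← inf_relIndex_right (H := P) (K := L), ← inf_relIndex_left (H := P) (K := L),
      relIndex_mul_index inf_le_right, relIndex_mul_index inf_le_left]
  have := congrArg (ordProj[p] ·) key
  rwa [Nat.ordProj_mul p (by rintro h; simp [h] at hPL) index_ne_zero_of_finite,
    Nat.ordProj_mul p (pow_ne_zero _ hp.ne_zero) index_ne_zero_of_finite,
    ordProj_of_not_dvd _ hPL, ordProj_of_not_dvd _ P.not_dvd_index, one_mul, mul_one,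
    Nat.ordProj_self_pow hp, ← hk] at this

theorem Group.IsNilpotent.index_inf_dvd {G : Type*} [Group G] [Finite G] [IsNilpotent G]
    (H K : Subgroup G) : (H ⊓ K).index ∣ H.index * K.index := by
  refine (Nat.ordProj_dvd_ordProj_iff_dvd index_ne_zero_of_finite
    (mul_ne_zero index_ne_zero_of_finite index_ne_zero_of_finite)).mp fun p => ?_
  by_cases hp : p.Prime
  · have := Fact.mk hp
    obtain ⟨P⟩ : Nonempty (Sylow p G) := inferInstance
    rw [Nat.ordProj_mul _ index_ne_zero_of_finite index_ne_zero_of_finite]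
    simp only [P.ordProj_index_eq_relIndex]
    exact P.isPGroup'.relIndex_inf_dvd H K
  · simp [Nat.factorization_eq_zero_of_not_prime _ hp]

theorem exists_commGroup_index_eq {a b c : ℕ} (ha : a ≠ 0) (hb : b ≠ 0)
    (hac : a ∣ c) (hbc : b ∣ c) (hcab : c ∣ a * b) :
    ∃ (A : Type) (_ : CommGroup A) (_ : Fintype A) (A1 A2 : Subgroup A),
      a = A1.index ∧ b = A2.index ∧ c = (A1 ⊓ A2).index := by
  obtain ⟨e, rfl⟩ := hac
  obtain ⟨g, rfl⟩ : e ∣ b := (Nat.mul_dvd_mul_iff_left (Nat.pos_of_ne_zero ha)).mp hcab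
  have hga : g ∣ a := by
    rw [mul_comm a] at hbc
    exact (Nat.mul_dvd_mul_iff_left (Nat.pos_of_ne_zero (left_ne_zero_of_mul hb))).mp hbc
  have := NeZero.mk ha
  have := NeZero.mk hb
  let C (n : ℕ) := Multiplicative (ZMod n)
  refine ⟨C a × C (e * g), inferInstance, inferInstance, (⊥ : Subgroup (C a)).prod ⊤,
    (powMonoidHom g : C a →* C a).range.prod (powMonoidHom e).range, ?_, ?_, ?_⟩
  · simp [index_prod, C]
  · rw [index_prod, IsCyclic.index_powMonoidHom_range_of_dvd (by simpa [C] using hga),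
      IsCyclic.index_powMonoidHom_range_of_dvd (by simp [C]), mul_comm]
  · rw [prod_inf_prod, bot_inf_eq, top_inf_eq, index_prod,
      IsCyclic.index_powMonoidHom_range_of_dvd (by simp [C])]
    simp [C]

theorem stmt_16 (G : Type) [Group G] [Fintype G] (hnil : Group.IsNilpotent G)
    (G1 G2 : Subgroup G) :
    ∃ (A : Type) (_ : CommGroup A) (_ : Fintype A) (A1 A2 : Subgroup A),
      G1.index = A1.index ∧ G2.index = A2.index ∧
        (G1 ⊓ G2).index = (A1 ⊓ A2).index := by
  have := hnil
  exact exists_commGroup_index_eq index_ne_zero_of_finite index_ne_zero_of_finite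
    (index_dvd_of_le inf_le_left) (index_dvd_of_le inf_le_right)
    (Group.IsNilpotent.index_inf_dvd G1 G2)
end

section
/- Let G be a finite group that is not nilpotent. Then for every n ≥ 2, G is not abelian group representable for n: there exist subgroups G_1, …, G_n of G such that no finite abelian group A with subgroups A_1, …, A_n satisfies [G : ⋂_{i∈𝒜} G_i] = [A : ⋂_{i∈𝒜} A_i] for every nonempty subset 𝒜 ⊆ {1, …, n}. -/
/-!
A finite group whose Sylow subgroups are all normal is nilpotent, so a non-nilpotent `G` has two
distinct Sylow `p`-subgroups `P ≠ Q`. Then `P ⊓ Q` is a proper subgroup of `P`, hence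
`p ∣ [G : P ⊓ Q]`, while `p` divides neither `[G : P]` nor `[G : Q]`. In an abelian group
`[A : A₁ ⊓ A₂]` divides `[A : A₁] [A : A₂]`, so no abelian `A` can match these three
indices.
-/

open Subgroup

section

variable {G : Type*} [Group G]

theorem Subgroup.index_inf_dvd_index_mul_index (H K : Subgroup G) [H.Normal] :
    (H ⊓ K).index ∣ H.index * K.index := by
  rw [← relIndex_mul_index (inf_le_right : H ⊓ K ≤ K), inf_relIndex_right]
  exact Nat.mul_dvd_mul_right (relIndex_dvd_index_of_normal H K) _

variable [Finite G]

theorem Sylow.prime_dvd_index_inf_of_ne {p : ℕ} [hp : Fact p.Prime] {P Q : Sylow p G}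
    (hPQ : P ≠ Q) : p ∣ ((P : Subgroup G) ⊓ Q).index := by
  obtain ⟨k, hk⟩ := IsPGroup.iff_card.mp P.isPGroup'
  have hdvd : ((P : Subgroup G) ⊓ Q).relIndex P ∣ p ^ k := hk ▸ index_dvd_card _
  have hne : ((P : Subgroup G) ⊓ Q).relIndex P ≠ 1 := by
    rw [Ne, relIndex_eq_one]
    exact fun hle => hPQ (Sylow.ext (P.is_maximal' Q.isPGroup' (hle.trans inf_le_right)).symm)
  obtain ⟨j, -, hj⟩ := (Nat.dvd_prime_pow hp.out).mp hdvd
  have hj0 : j ≠ 0 := by rintro rfl; exact hne hj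
  rw [← relIndex_mul_index (inf_le_left : (P : Subgroup G) ⊓ Q ≤ P), hj]
  exact (dvd_pow_self p hj0).mul_right _

theorem exists_sylow_ne_of_not_isNilpotent (h : ¬ Group.IsNilpotent G) :
    ∃ (p : ℕ) (_ : Fact p.Prime) (P Q : Sylow p G), P ≠ Q := by
  by_contra! hsub
  refine h ((Group.isNilpotent_of_finite_tfae.out 3 0).mp fun p hp P => ?_)
  have : Subsingleton (Sylow p G) := ⟨hsub p hp⟩
  exact Sylow.normal_of_subsingleton P

end

theorem stmt_17 (G : Type) [Group G] [Fintype G] (hnil : ¬ Group.IsNilpotent G)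
    (n : ℕ) (hn : 2 ≤ n) :
    ∃ Gs : Fin n → Subgroup G,
      ∀ (A : Type) (_ : CommGroup A) (_ : Fintype A) (As : Fin n → Subgroup A),
        ¬ ∀ S : Finset (Fin n), S.Nonempty →
            (⨅ i ∈ S, Gs i).index = (⨅ i ∈ S, As i).index := by
  obtain ⟨p, hp, P, Q, hPQ⟩ := exists_sylow_ne_of_not_isNilpotent hnil
  let i₀ : Fin n := ⟨0, by omega⟩
  let i₁ : Fin n := ⟨1, by omega⟩
  have hi : i₁ ≠ i₀ := by simp [i₀, i₁, Fin.ext_iff]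
  refine ⟨fun i => if i = i₀ then P else Q, fun A _ _ As h => ?_⟩
  have e₀ := h {i₀} (Finset.singleton_nonempty _)
  have e₁ := h {i₁} (Finset.singleton_nonempty _)
  have e₀₁ := h {i₀, i₁} (Finset.insert_nonempty _ _)
  simp only [↓reduceIte, Finset.iInf_singleton, Finset.iInf_insert, if_neg hi]
    at e₀ e₁ e₀₁
  have hdvd : p ∣ (P : Subgroup G).index * (Q : Subgroup G).index :=
    calc p ∣ ((P : Subgroup G) ⊓ Q).index := Sylow.prime_dvd_index_inf_of_ne hPQ
      _ = (As i₀ ⊓ As i₁).index := e₀₁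
      _ ∣ (As i₀).index * (As i₁).index := index_inf_dvd_index_mul_index _ _
      _ = (P : Subgroup G).index * (Q : Subgroup G).index := by rw [e₀, e₁]
  exact hp.out.not_dvd_mul P.not_dvd_index Q.not_dvd_index hdvd
end

section
/- Let m ≥ 3 and suppose m is not a power of 2. Then for every n ≥ 2, neither the dihedral group DihedralGroup m nor the dicyclic group QuaternionGroup m is abelian group representable for n. -/
/-! In an abelian group `[A : H ⊓ K]` divides `[A : H] [A : K]`, so the same must hold for any
pair of subgroups represented by an abelian group. Two distinct Sylow `p`-subgroups `P ≠ Q` violate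
this: `p` divides `[G : P ⊓ Q] = [P : P ⊓ Q] [G : P]` but neither `[G : P]` nor `[G : Q]`.
In `DihedralGroup m` the reflections `sr 0`, `sr 1` have order `2` but their product `r 1` has
order `m`; in `QuaternionGroup m` the elements `xa m`, `xa 1` have order `4` but their product
`a 1` has order `2m`. When `m` is not a power of `2`, neither pair lies in a single Sylow
`2`-subgroup. -/

theorem Subgroup.index_inf_dvd_mul_index {G : Type*} [Group G] (H K : Subgroup G) [H.Normal] :
    (H ⊓ K).index ∣ H.index * K.index := by
  rw [← Subgroup.relIndex_mul_index (inf_le_right : H ⊓ K ≤ K), Subgroup.inf_relIndex_right]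
  exact mul_dvd_mul_right (H.relIndex_dvd_index_of_normal K) _

section Represents

variable {G A : Type*} [Group G] [Group A] {n : ℕ} {Gs : Fin n → Subgroup G}
  {As : Fin n → Subgroup A}

theorem Represents.index_eq (h : Represents Gs As) (i : Fin n) :
    (Gs i).index = (As i).index := by
  simpa only [Finset.iInf_singleton] using h {i} (Finset.singleton_nonempty i)

theorem Represents.index_inf_eq (h : Represents Gs As) (i j : Fin n) :
    (Gs i ⊓ Gs j).index = (As i ⊓ As j).index := by
  simpa only [Finset.iInf_insert, Finset.iInf_singleton] using h {i, j} (Finset.insert_nonempty i _)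

theorem Represents.index_inf_dvd {A : Type*} [CommGroup A] {As : Fin n → Subgroup A}
    (h : Represents Gs As) (i j : Fin n) :
    (Gs i ⊓ Gs j).index ∣ (Gs i).index * (Gs j).index := by
  rw [h.index_inf_eq, h.index_eq, h.index_eq]
  exact Subgroup.index_inf_dvd_mul_index _ _

end Represents

theorem not_abelianGroupRepresentable_of_prime_dvd_index_inf {G : Type*} [Group G] {n p : ℕ}
    (hn : 2 ≤ n) (hp : p.Prime) {H K : Subgroup G} (hH : ¬ p ∣ H.index) (hK : ¬ p ∣ K.index)
    (hHK : p ∣ (H ⊓ K).index) : ¬ AbelianGroupRepresentable G n := by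
  obtain ⟨k, rfl⟩ := Nat.exists_eq_add_of_le' hn
  intro hrep
  obtain ⟨A, _, _, As, h⟩ := hrep fun i => if i = 0 then H else K
  have hdvd := h.index_inf_dvd 0 1
  simp only [if_neg Fin.zero_ne_one.symm] at hdvd
  exact (hp.dvd_mul.mp (hHK.trans hdvd)).elim hH hK

theorem Sylow.prime_dvd_index_inf {G : Type*} [Group G] [Finite G] {p : ℕ} [Fact p.Prime]
    {P Q : Sylow p G} (hPQ : P ≠ Q) : p ∣ ((P : Subgroup G) ⊓ Q).index := by
  have hQP : Q.relIndex P ≠ 1 := fun h =>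
    hPQ (Sylow.ext (P.is_maximal' Q.isPGroup' (Subgroup.relIndex_eq_one.mp h)).symm)
  obtain ⟨k, hk⟩ := P.isPGroup'.index ((Q : Subgroup G).subgroupOf P)
  have hk0 : k ≠ 0 := by
    rintro rfl
    exact hQP (hk.trans (pow_zero p))
  rw [← Subgroup.relIndex_mul_index inf_le_left, Subgroup.inf_relIndex_left, Subgroup.relIndex, hk]
  exact dvd_mul_of_dvd_left (dvd_pow_self p hk0) _

theorem Sylow.exists_ne_of_orderOf_mul {G : Type*} [Group G] [Finite G] {p : ℕ} [Fact p.Prime]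
    {g h : G} (hg : ∃ k, orderOf g = p ^ k) (hh : ∃ k, orderOf h = p ^ k)
    (hgh : ¬ ∃ k, orderOf (g * h) = p ^ k) : ∃ P Q : Sylow p G, P ≠ Q := by
  have zpowers_le_sylow {x : G} (hx : ∃ k, orderOf x = p ^ k) :
      ∃ P : Sylow p G, Subgroup.zpowers x ≤ P := by
    obtain ⟨k, hk⟩ := hx
    exact (IsPGroup.of_card ((Nat.card_zpowers x).trans hk)).exists_le_sylow
  obtain ⟨P, hP⟩ := zpowers_le_sylow hg
  obtain ⟨Q, hQ⟩ := zpowers_le_sylow hh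
  refine ⟨P, Q, ?_⟩
  rintro rfl
  have hmem : g * h ∈ (P : Subgroup G) :=
    mul_mem (hP (Subgroup.mem_zpowers g)) (hQ (Subgroup.mem_zpowers h))
  obtain ⟨k, hk⟩ := IsPGroup.iff_orderOf.mp P.isPGroup' ⟨g * h, hmem⟩
  exact hgh ⟨k, by rwa [Subgroup.orderOf_mk] at hk⟩

theorem not_abelianGroupRepresentable_of_orderOf_mul {G : Type*} [Group G] [Finite G] {n p : ℕ}
    (hn : 2 ≤ n) (hp : p.Prime) {g h : G} (hg : ∃ k, orderOf g = p ^ k)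
    (hh : ∃ k, orderOf h = p ^ k) (hgh : ¬ ∃ k, orderOf (g * h) = p ^ k) :
    ¬ AbelianGroupRepresentable G n := by
  have := Fact.mk hp
  obtain ⟨P, Q, hPQ⟩ := Sylow.exists_ne_of_orderOf_mul hg hh hgh
  exact not_abelianGroupRepresentable_of_prime_dvd_index_inf hn hp P.not_dvd_index
    Q.not_dvd_index (Sylow.prime_dvd_index_inf hPQ)

theorem stmt_19 (m : ℕ) (hm : 3 ≤ m) (hpow : ¬ ∃ t : ℕ, m = 2 ^ t)
    (n : ℕ) (hn : 2 ≤ n) :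
    ¬ AbelianGroupRepresentable (DihedralGroup m) n ∧
    ¬ AbelianGroupRepresentable (QuaternionGroup m) n := by
  have : NeZero m := ⟨by omega⟩
  constructor
  · refine not_abelianGroupRepresentable_of_orderOf_mul hn Nat.prime_two
      (g := DihedralGroup.sr 0) (h := DihedralGroup.sr 1) ⟨1, DihedralGroup.orderOf_sr 0⟩
      ⟨1, DihedralGroup.orderOf_sr 1⟩ ?_
    rw [DihedralGroup.sr_mul_sr, sub_zero, DihedralGroup.orderOf_r_one]
    exact hpow
  · refine not_abelianGroupRepresentable_of_orderOf_mul hn Nat.prime_two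
      (g := QuaternionGroup.xa m) (h := QuaternionGroup.xa 1) ⟨2, QuaternionGroup.orderOf_xa _⟩
      ⟨2, QuaternionGroup.orderOf_xa 1⟩ ?_
    rw [QuaternionGroup.xa_mul_xa, add_sub_cancel_left, QuaternionGroup.orderOf_a_one]
    rintro ⟨_ | k, hk⟩
    · omega
    · exact hpow ⟨k, by rw [pow_succ] at hk; omega⟩
end
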